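/- Let [M] be an interval matrix with center M^c, radius M^Δ ≥ 0 entrywise. Suppose â := min_{s ∈ {−1,+1}ⁿ} (−μ₂(−M^c + diag(s)M^Δdiag(s))) ≥ a and b̂ := max_{s ∈ {−1,+1}ⁿ} μ₂(M^c + diag(s)M^Δdiag(s)) ≤ b. Then every M ∈ [M] satisfies a·I ⪯ (M+Mᵀ)/2 ⪯ b·I (in the positive semidefinite order). -/

import Mathlib

open Matrix

lemma symPart_isHermitian {n : ℕ} (A : Matrix (Fin n) (Fin n) ℝ) :
    ((1/2 : ℝ) • (A + Aᵀ)).IsHermitian := by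
  ext i j
  simp [Matrix.conjTranspose_apply, Matrix.transpose_apply, add_comm]
  ring

/-- The ℓ₂-logarithmic norm `μ₂(A) = λ_max((A + Aᵀ)/2)`:
the largest eigenvalue of the symmetric part of `A`. -/
noncomputable def mu2 {n : ℕ} (A : Matrix (Fin n) (Fin n) ℝ) : ℝ :=
  ⨆ i, (symPart_isHermitian A).eigenvalues i

/-!
A point `M` of the interval matrix and a vector `x` satisfy, for all `i j`,
`x i * M i j * x j ≤ x i * Mc i j * x j + |x i| * MΔ i j * |x j|`, and the right-hand side is the
quadratic form at `x` of the corner `Mc + diag(s) MΔ diag(s)` with `s` the sign vector of `x`.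
The corner checks bound this quadratic form by `b ‖x‖²`, which is the Loewner bound
`(M + Mᵀ)/2 ⪯ b I`; the lower bound is the upper bound for `-M ∈ [-Mc ± MΔ]`.
-/

lemma exists_sign_mul_eq_abs {ι : Type*} (x : ι → ℝ) :
    ∃ s : ι → ℝ, (∀ i, s i = 1 ∨ s i = -1) ∧ ∀ i, s i * x i = |x i| := by
  refine ⟨fun i => if 0 ≤ x i then 1 else -1, fun i => ?_, fun i => ?_⟩ <;>
    by_cases hx : 0 ≤ x i
  · simp [hx]
  · simp [hx]
  · simp [hx, abs_of_nonneg hx]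
  · simp [hx, abs_of_neg (not_le.mp hx)]

section QuadraticForm

variable {ι : Type*} [Fintype ι]

lemma dotProduct_symPart_mulVec (A : Matrix ι ι ℝ) (x : ι → ℝ) :
    x ⬝ᵥ ((1/2 : ℝ) • (A + Aᵀ)) *ᵥ x = x ⬝ᵥ A *ᵥ x := by
  rw [smul_mulVec, dotProduct_smul, add_mulVec, dotProduct_add, dotProduct_transpose_mulVec,
    smul_eq_mul]
  ring

variable [DecidableEq ι]

lemma posSemidef_smul_one_sub_iff {S : Matrix ι ι ℝ} (hS : S.IsHermitian) (b : ℝ) :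
    (b • (1 : Matrix ι ι ℝ) - S).PosSemidef ↔ ∀ x, x ⬝ᵥ S *ᵥ x ≤ b * (x ⬝ᵥ x) := by
  rw [posSemidef_iff_dotProduct_mulVec, and_iff_right ((isHermitian_one.smul (.all b)).sub hS)]
  simp only [star_trivial, sub_mulVec, smul_mulVec, one_mulVec, dotProduct_sub, dotProduct_smul,
    smul_eq_mul, sub_nonneg]

lemma posSemidef_sub_smul_one_iff {S : Matrix ι ι ℝ} (hS : S.IsHermitian) (a : ℝ) :
    (S - a • (1 : Matrix ι ι ℝ)).PosSemidef ↔ ∀ x, a * (x ⬝ᵥ x) ≤ x ⬝ᵥ S *ᵥ x := by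
  rw [posSemidef_iff_dotProduct_mulVec, and_iff_right (hS.sub (isHermitian_one.smul (.all a)))]
  simp only [star_trivial, sub_mulVec, smul_mulVec, one_mulVec, dotProduct_sub, dotProduct_smul,
    smul_eq_mul, sub_nonneg]

open MatrixOrder in
lemma Matrix.IsHermitian.posSemidef_smul_one_sub_of_eigenvalues_le {S : Matrix ι ι ℝ}
    (hS : S.IsHermitian) {b : ℝ} (h : ∀ i, hS.eigenvalues i ≤ b) :
    (b • (1 : Matrix ι ι ℝ) - S).PosSemidef := by
  have hle : S ≤ algebraMap ℝ _ b := le_algebraMap_of_spectrum_le (by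
    rw [hS.spectrum_real_eq_range_eigenvalues]
    rintro _ ⟨i, rfl⟩
    exact h i) hS
  rwa [Algebra.algebraMap_eq_smul_one, le_iff] at hle

lemma dotProduct_mulVec_le_corner {M C Δ : Matrix ι ι ℝ} (hM : ∀ i j, |M i j - C i j| ≤ Δ i j)
    {x s : ι → ℝ} (hs : ∀ i, s i * x i = |x i|) :
    x ⬝ᵥ M *ᵥ x ≤ x ⬝ᵥ (C + diagonal s * Δ * diagonal s) *ᵥ x := by
  simp only [dotProduct, mulVec, Finset.mul_sum]
  refine Finset.sum_le_sum fun i _ => Finset.sum_le_sum fun j _ => ?_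
  have hdev : (M i j - C i j) * (x i * x j) ≤ Δ i j * (|x i| * |x j|) :=
    calc (M i j - C i j) * (x i * x j)
        ≤ |M i j - C i j| * (|x i| * |x j|) := by
          rw [← abs_mul, ← abs_mul]; exact le_abs_self _
      _ ≤ Δ i j * (|x i| * |x j|) := by gcongr; exact hM i j
  have hcorner : x i * ((C i j + s i * Δ i j * s j) * x j)
      = x i * (C i j * x j) + Δ i j * (|x i| * |x j|) := by
    rw [← hs i, ← hs j]; ring
  simp only [Matrix.add_apply, mul_diagonal, diagonal_mul, hcorner]
  linarith

end QuadraticForm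

lemma dotProduct_mulVec_le_mu2_mul {n : ℕ} (A : Matrix (Fin n) (Fin n) ℝ) (x : Fin n → ℝ) :
    x ⬝ᵥ A *ᵥ x ≤ mu2 A * (x ⬝ᵥ x) := by
  rw [← dotProduct_symPart_mulVec]
  refine (posSemidef_smul_one_sub_iff (symPart_isHermitian A) _).1 ?_ x
  exact (symPart_isHermitian A).posSemidef_smul_one_sub_of_eigenvalues_le fun i =>
    le_ciSup (Set.finite_range _).bddAbove i

lemma dotProduct_mulVec_le_of_corners {n : ℕ} {Mc MΔ M : Matrix (Fin n) (Fin n) ℝ} {b : ℝ}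
    (hb : ∀ s : Fin n → ℝ, (∀ i, s i = 1 ∨ s i = -1) →
      mu2 (Mc + diagonal s * MΔ * diagonal s) ≤ b)
    (hM : ∀ i j, |M i j - Mc i j| ≤ MΔ i j) (x : Fin n → ℝ) :
    x ⬝ᵥ M *ᵥ x ≤ b * (x ⬝ᵥ x) := by
  obtain ⟨s, hs, hsx⟩ := exists_sign_mul_eq_abs x
  calc x ⬝ᵥ M *ᵥ x ≤ x ⬝ᵥ (Mc + diagonal s * MΔ * diagonal s) *ᵥ x :=
        dotProduct_mulVec_le_corner hM hsx
    _ ≤ mu2 (Mc + diagonal s * MΔ * diagonal s) * (x ⬝ᵥ x) := dotProduct_mulVec_le_mu2_mul _ x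
    _ ≤ b * (x ⬝ᵥ x) :=
        mul_le_mul_of_nonneg_right (hb s hs) (by simpa using dotProduct_self_star_nonneg x)

theorem corner_checks_uniform_definiteness_general {n : ℕ}
    (Mc MΔ : Matrix (Fin n) (Fin n) ℝ) (a b : ℝ)
    (ha : ∀ s : Fin n → ℝ, (∀ i, s i = 1 ∨ s i = -1) →
      a ≤ -mu2 (-Mc + Matrix.diagonal s * MΔ * Matrix.diagonal s))
    (hb : ∀ s : Fin n → ℝ, (∀ i, s i = 1 ∨ s i = -1) →
      mu2 (Mc + Matrix.diagonal s * MΔ * Matrix.diagonal s) ≤ b) :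
    ∀ M : Matrix (Fin n) (Fin n) ℝ, (∀ i j, |M i j - Mc i j| ≤ MΔ i j) →
      ((1/2 : ℝ) • (M + Mᵀ) - a • (1 : Matrix (Fin n) (Fin n) ℝ)).PosSemidef ∧
      (b • (1 : Matrix (Fin n) (Fin n) ℝ) - (1/2 : ℝ) • (M + Mᵀ)).PosSemidef := by
  intro M hM
  have hM_neg : ∀ i j, |(-M) i j - (-Mc) i j| ≤ MΔ i j := fun i j => by
    rw [neg_apply, neg_apply, neg_sub_neg, abs_sub_comm]; exact hM i j
  refine ⟨(posSemidef_sub_smul_one_iff (symPart_isHermitian M) a).2 fun x => ?_,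
    (posSemidef_smul_one_sub_iff (symPart_isHermitian M) b).2 fun x => ?_⟩
  · have hx := dotProduct_mulVec_le_of_corners (b := -a)
      (fun s hs => le_neg_of_le_neg (ha s hs)) hM_neg x
    rw [neg_mulVec, dotProduct_neg] at hx
    rw [dotProduct_symPart_mulVec]
    linarith
  · rw [dotProduct_symPart_mulVec]
    exact dotProduct_mulVec_le_of_corners hb hM x

/-- If all corner checks certify a ≤ λ_min and λ_max ≤ b, then every matrix in the interval
matrix [M^c − M^Δ, M^c + M^Δ] satisfies a·I ⪯ (M+Mᵀ)/2 ⪯ b·I in the Loewner order. -/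
theorem corner_checks_uniform_definiteness {n : ℕ}
    (Mc MΔ : Matrix (Fin n) (Fin n) ℝ) (hMΔ : ∀ i j, 0 ≤ MΔ i j) (a b : ℝ)
    (ha : ∀ s : Fin n → ℝ, (∀ i, s i = 1 ∨ s i = -1) →
      a ≤ -mu2 (-Mc + Matrix.diagonal s * MΔ * Matrix.diagonal s))
    (hb : ∀ s : Fin n → ℝ, (∀ i, s i = 1 ∨ s i = -1) →
      mu2 (Mc + Matrix.diagonal s * MΔ * Matrix.diagonal s) ≤ b) :
    ∀ M : Matrix (Fin n) (Fin n) ℝ, (∀ i j, |M i j - Mc i j| ≤ MΔ i j) →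
      ((1/2 : ℝ) • (M + Mᵀ) - a • (1 : Matrix (Fin n) (Fin n) ℝ)).PosSemidef ∧
      (b • (1 : Matrix (Fin n) (Fin n) ℝ) - (1/2 : ℝ) • (M + Mᵀ)).PosSemidef :=
  corner_checks_uniform_definiteness_general Mc MΔ a b ha hb
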